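/- Let G be a metabelian group, let y be an element of the commutator subgroup [G,G], let x, z ∈ G, and let H be a subgroup of G. If y ∈ H, [y,x] ∈ H, and [y,z] ∈ H, then [[y,x],z] lies in dom_G^{𝒜²}(H). -/

import Mathlib

universe u v

/-- The dominion of a subgroup `H` of `G` in the class of groups `P`. -/
def dominion {G : Type v} [Group G] (P : (K : Type u) → [Group K] → Prop)
    (H : Subgroup G) : Set G :=
  {a : G | ∀ (K : Type u) [Group K], P K → ∀ f g : G →* K,
    (∀ h ∈ H, f h = g h) → f a = g a}

/-- The commutator `[a,b] = a⁻¹b⁻¹ab`. -/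
def commElem {G : Type v} [Group G] (a b : G) : G := a⁻¹ * b⁻¹ * a * b

/-- The class `𝒜²` of metabelian groups: groups whose commutator subgroup is
abelian, i.e. whose second derived subgroup is trivial. -/
def Metabelian (K : Type u) [Group K] : Prop := derivedSeries K 2 = ⊥

open scoped commutatorElement

/-!
Let `f, g : G → K` agree on `H`, with `K` metabelian, and put `Y = f y = g y ∈ [K,K]`.
For fixed `u`, `[u,c] = [u,c']` says exactly that `c c'⁻¹` centralizes `u`. So `[Y,f z] = [Y,g z]`
means that `d = f z (g z)⁻¹` centralizes `Y`; then `d` also centralizes `[Y,b]` for every `b`,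
because `b d b⁻¹ = d [d,b⁻¹]` and `[d,b⁻¹]` commutes with `Y`, both lying in the abelian
group `[K,K]`. Hence `[[Y,f x],f z] = [[Y,f x],g z] = [[Y,g x],g z]`.
-/

section commElem

variable {G : Type v} [Group G]

theorem map_commElem {K : Type u} [Group K] (f : G →* K) (a b : G) :
    f (commElem a b) = commElem (f a) (f b) := by
  simp only [commElem, map_mul, map_inv]

theorem commElem_eq_commutatorElement_inv (a b : G) : commElem a b = ⁅a⁻¹, b⁻¹⁆ := by
  simp only [commElem, commutatorElement_def, inv_inv]

theorem commElem_mem_commutator (a b : G) : commElem a b ∈ commutator G := by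
  rw [commElem_eq_commutatorElement_inv]
  exact Subgroup.commutator_mem_commutator (Subgroup.mem_top _) (Subgroup.mem_top _)

theorem commElem_eq_commElem_iff_commute {u c c' : G} :
    commElem u c = commElem u c' ↔ Commute u (c * c'⁻¹) := by
  have hconj : commElem u c = commElem u c' ↔ c⁻¹ * u * c = c'⁻¹ * u * c' := by
    simp only [commElem, mul_assoc, mul_right_inj]
  rw [hconj, Commute, SemiconjBy]
  constructor <;> intro h
  · calc u * (c * c'⁻¹) = c * (c⁻¹ * u * c) * c'⁻¹ := by group
      _ = c * c'⁻¹ * u := by rw [h]; group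
  · calc c⁻¹ * u * c = c⁻¹ * (u * (c * c'⁻¹)) * c' := by group
      _ = c'⁻¹ * u * c' := by rw [h]; group

end commElem

section Metabelian

variable {K : Type u} [Group K]

theorem Metabelian.commute_of_mem_commutator (hK : Metabelian K) {p q : K}
    (hp : p ∈ commutator K) (hq : q ∈ commutator K) : Commute p q := by
  have hpq : ⁅p, q⁆ ∈ derivedSeries K 2 := Subgroup.commutator_mem_commutator hp hq
  rw [hK, Subgroup.mem_bot] at hpq
  exact commutatorElement_eq_one_iff_commute.mp hpq

theorem Metabelian.commute_commElem_of_commute (hK : Metabelian K) {Y d : K}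
    (hY : Y ∈ commutator K) (hYd : Commute Y d) (b : K) : Commute (commElem Y b) d := by
  have hconj : b * d * b⁻¹ = d * commElem d b⁻¹ := by simp only [commElem]; group
  have hY_conj : Commute Y (b * d * b⁻¹) := by
    rw [hconj]
    exact hYd.mul_right (hK.commute_of_mem_commutator hY (commElem_mem_commutator _ _))
  have hYb : Commute (b⁻¹ * Y * b) d := by
    simpa only [inv_inv, mul_assoc, inv_mul_cancel_left, inv_mul_cancel, mul_one]
      using hY_conj.conj b⁻¹
  have hsplit : commElem Y b = Y⁻¹ * (b⁻¹ * Y * b) := by simp only [commElem, mul_assoc]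
  rw [hsplit]
  exact hYd.inv_left.mul_left hYb

theorem Metabelian.commElem_commElem_congr_right (hK : Metabelian K) {Y c c' : K}
    (hY : Y ∈ commutator K) (h : commElem Y c = commElem Y c') (b : K) :
    commElem (commElem Y b) c = commElem (commElem Y b) c' :=
  commElem_eq_commElem_iff_commute.mpr
    (hK.commute_commElem_of_commute hY (commElem_eq_commElem_iff_commute.mp h) b)

end Metabelian

theorem comm_comm_mem_dominion_general {G : Type u} [Group G]
    (H : Subgroup G)
    (y : G) (hyc : y ∈ commutator G) (x z : G)
    (hy : y ∈ H) (hyx : commElem y x ∈ H) (hyz : commElem y z ∈ H) :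
    commElem (commElem y x) z ∈ dominion Metabelian H := by
  intro K _ hK f g hfg
  have hfy : f y = g y := hfg y hy
  have hfyx : commElem (f y) (f x) = commElem (g y) (g x) := by
    simpa only [map_commElem] using hfg _ hyx
  have hfyz : commElem (f y) (f z) = commElem (f y) (g z) := by
    simpa only [map_commElem, hfy] using hfg _ hyz
  have hY : f y ∈ commutator K :=
    map_derivedSeries_le_derivedSeries f 1 (Subgroup.mem_map_of_mem f hyc)
  simp only [map_commElem]
  rw [hK.commElem_commElem_congr_right hY hfyz, hfyx]

/-- Let `G` be metabelian, `y` an element of the commutator subgroup of `G`,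
`x, z ∈ G`, and `H ≤ G`.  If `y ∈ H`, `[y,x] ∈ H` and `[y,z] ∈ H`, then
`[[y,x],z]` lies in the `𝒜²`-dominion of `H` in `G`. -/
theorem comm_comm_mem_dominion {G : Type u} [Group G]
    (hG : derivedSeries G 2 = ⊥) (H : Subgroup G)
    (y : G) (hyc : y ∈ commutator G) (x z : G)
    (hy : y ∈ H) (hyx : commElem y x ∈ H) (hyz : commElem y z ∈ H) :
    commElem (commElem y x) z ∈ dominion Metabelian H :=
  comm_comm_mem_dominion_general H y hyc x z hy hyx hyz
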